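/- arXiv:2512.11129 — 3 statements merged into one kernel-verified Lean document; each statement's English description precedes it below -/
import Mathlib

section
/- Let Q be an acyclic conjunctive query whose atoms are all binary, such that Q is bound-connected (the bound variables induce a connected query graph and every free variable is adjacent to a bound variable or the query is a single atom). Then the query graph of Q is a tree in which every free variable occurs only at a leaf, and the fractional edge cover number of the set of free variables satisfies: it equals 1 if Q consists of a single atom whose both variables are free, and it equals the number of free variables otherwise. -/
/-!
The bound variables induce a connected subgraph that dominates the free ones, so the query graph
is connected, hence a tree. A free variable with two neighbours would see them joined through the
bound part while avoiding it, closing a cycle; so free variables are leaves, attached to bound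
variables unless the query is a single atom. Each pendant edge at a free variable is then forced to
weight at least one, and weight exactly one on these edges is an optimal fractional cover; they are
pairwise distinct except in the single all-free atom, where there is only one.
-/

open scoped Classical

/-- Fractional edge cover number of a vertex set `F` in a simple graph `G`:
the infimum of total weights of nonnegative edge weightings such that every
vertex of `F` has incident weight at least 1. -/
noncomputable def rhoStar {V : Type*} [Fintype V] (G : SimpleGraph V) (F : Finset V) : ℝ :=
  sInf {c : ℝ | ∃ w : Sym2 V → ℝ, (∀ e, 0 ≤ w e) ∧
    (∀ v ∈ F, 1 ≤ ∑ e ∈ G.edgeFinset.filter (fun e => v ∈ e), w e) ∧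
    c = ∑ e ∈ G.edgeFinset, w e}

open Finset

namespace SimpleGraph

variable {V : Type*} {G : SimpleGraph V}

theorem exists_walk_support_subset_of_preconnected_induce {S : Set V}
    (hS : (G.induce S).Preconnected) {a b : V} (ha : a ∈ S) (hb : b ∈ S) :
    ∃ p : G.Walk a b, ∀ x ∈ p.support, x ∈ S := by
  obtain ⟨p⟩ := hS ⟨a, ha⟩ ⟨b, hb⟩
  refine ⟨p.map (Embedding.induce S).toHom, fun x hx => ?_⟩
  obtain ⟨y, -, rfl⟩ := List.mem_map.mp (Walk.support_map _ p ▸ hx)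
  exact y.2

theorem connected_of_connected_induce {S : Set V} (hS : (G.induce S).Connected)
    (hdom : ∀ v ∉ S, ∃ u ∈ S, G.Adj v u) : G.Connected := by
  obtain ⟨⟨s, -⟩⟩ := hS.nonempty
  have hreach : ∀ v, ∃ u ∈ S, G.Reachable v u := fun v => by
    by_cases hv : v ∈ S
    · exact ⟨v, hv, .rfl⟩
    · obtain ⟨u, hu, hvu⟩ := hdom v hv
      exact ⟨u, hu, hvu.reachable⟩
  have : Nonempty V := ⟨s⟩
  refine ⟨fun a b => ?_⟩
  obtain ⟨a', ha', haa'⟩ := hreach a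
  obtain ⟨b', hb', hbb'⟩ := hreach b
  exact haa'.trans (((hS ⟨a', ha'⟩ ⟨b', hb'⟩).map (Embedding.induce S).toHom).trans hbb'.symm)

theorem IsAcyclic.eq_of_adj_of_adj_of_notMem {S : Set V} (hG : G.IsAcyclic)
    (hS : (G.induce S).Preconnected) (hdom : ∀ v ∉ S, ∃ u ∈ S, G.Adj v u)
    {v x y : V} (hv : v ∉ S) (hx : G.Adj v x) (hy : G.Adj v y) : x = y := by
  obtain ⟨u, hu, hvu⟩ := hdom v hv
  suffices h : ∀ z, G.Adj v z → z = u from (h x hx).trans (h y hy).symm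
  intro z hvz
  by_contra hzu
  obtain ⟨q, hq⟩ : ∃ q : G.Walk z u, v ∉ q.support := by
    by_cases hz : z ∈ S
    · obtain ⟨q, hqS⟩ := exists_walk_support_subset_of_preconnected_induce hS hz hu
      exact ⟨q, fun hvq => hv (hqS v hvq)⟩
    · obtain ⟨w, hw, hzw⟩ := hdom z hz
      obtain ⟨q, hqS⟩ := exists_walk_support_subset_of_preconnected_induce hS hw hu
      refine ⟨.cons hzw q, ?_⟩
      rw [Walk.support_cons, List.mem_cons, not_or]
      exact ⟨hvz.ne, fun hvq => hv (hqS v hvq)⟩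
  have hmem := isBridge_iff_forall_walk_mem_edges.mp
    (isAcyclic_iff_forall_adj_isBridge.mp hG hvu) (.cons hvz q)
  rw [Walk.edges_cons, List.mem_cons, Sym2.congr_right] at hmem
  rcases hmem with rfl | hmem
  · exact hzu rfl
  · exact hq (q.fst_mem_support_of_mem_edges hmem)

variable [Fintype V]

theorem edge_eq_of_edgeFinset_eq_singleton {e : Sym2 V} (he : G.edgeFinset = {e})
    {x y : V} (h : G.Adj x y) : s(x, y) = e :=
  mem_singleton.mp (he ▸ mem_edgeFinset.mpr h)

theorem connected_of_edgeFinset_eq_singleton {e : Sym2 V} (he : G.edgeFinset = {e})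
    (hvars : ∀ v, ∃ u, G.Adj v u) : G.Connected := by
  obtain ⟨a, b⟩ := e
  have : Nonempty V := ⟨a⟩
  have hab : G.Adj a b := mem_edgeFinset.mp (he ▸ mem_singleton_self _)
  have hreach : ∀ v, G.Reachable a v := fun v => by
    obtain ⟨u, hvu⟩ := hvars v
    rcases Sym2.eq_iff.mp (edge_eq_of_edgeFinset_eq_singleton he hvu) with ⟨rfl, -⟩ | ⟨rfl, -⟩
    · exact .rfl
    · exact hab.reachable
  exact ⟨fun v w => (hreach v).symm.trans (hreach w)⟩

theorem eq_of_adj_of_adj_of_edgeFinset_eq_singleton {e : Sym2 V} (he : G.edgeFinset = {e})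
    {v x y : V} (hx : G.Adj v x) (hy : G.Adj v y) : x = y :=
  Sym2.congr_right.mp <| (edge_eq_of_edgeFinset_eq_singleton he hx).trans
    (edge_eq_of_edgeFinset_eq_singleton he hy).symm

theorem degree_eq_one_of_adj_unique {v : V} (hex : ∃ u, G.Adj v u)
    (huniq : ∀ x y, G.Adj v x → G.Adj v y → x = y) : G.degree v = 1 := by
  obtain ⟨u, hu⟩ := hex
  exact degree_eq_one_iff_existsUnique_adj.mpr ⟨u, hu, fun x hx => huniq x u hx hu⟩

theorem card_biUnion_incidenceFinset_of_forall_not_adj {F : Finset V}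
    (hind : ∀ x ∈ F, ∀ y ∈ F, ¬ G.Adj x y) :
    #(F.biUnion fun v => G.incidenceFinset v) = ∑ v ∈ F, G.degree v := by
  rw [card_biUnion fun x hx y hy hxy => ?_]
  · simp only [card_incidenceFinset_eq_degree]
  change Disjoint (G.incidenceFinset x) (G.incidenceFinset y)
  rw [← disjoint_coe, coe_incidenceFinset, coe_incidenceFinset, Set.disjoint_iff_inter_eq_empty]
  exact G.incidenceSet_inter_incidenceSet_of_not_adj (hind x hx y hy) hxy

theorem biUnion_incidenceFinset_eq_singleton {F : Finset V} {e : Sym2 V}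
    (he : G.edgeFinset = {e}) (hF : ∀ v ∈ e, v ∈ F) :
    (F.biUnion fun v => G.incidenceFinset v) = {e} := by
  refine eq_singleton_iff_unique_mem.mpr ⟨mem_biUnion.mpr ⟨_, hF _ e.out_fst_mem, ?_⟩, ?_⟩
  · rw [incidenceFinset_eq_filter, he]
    simp [Sym2.out_fst_mem]
  · intro f hf
    obtain ⟨v, -, hfv⟩ := mem_biUnion.mp hf
    exact mem_singleton.mp (he ▸ G.incidenceFinset_subset v hfv)

end SimpleGraph

open SimpleGraph

theorem rhoStar_eq_card_biUnion_incidenceFinset {V : Type*} [Fintype V] (G : SimpleGraph V)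
    (F : Finset V) (hF : ∀ v ∈ F, G.degree v = 1) :
    rhoStar G F = #(F.biUnion fun v => G.incidenceFinset v) := by
  set U := F.biUnion fun v => G.incidenceFinset v
  have hinc : ∀ v ∈ F, ∃ e, G.edgeFinset.filter (fun e => v ∈ e) = {e} := fun v hv =>
    card_eq_one.mp (by rw [← incidenceFinset_eq_filter, card_incidenceFinset_eq_degree, hF v hv])
  have hU : U ⊆ G.edgeFinset := biUnion_subset.mpr fun v _ => G.incidenceFinset_subset v
  refine IsLeast.csInf_eq ⟨⟨fun e => if e ∈ U then 1 else 0, fun e => by positivity,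
    fun v hv => ?_, ?_⟩, ?_⟩
  · obtain ⟨e, he⟩ := hinc v hv
    have heU : e ∈ U := mem_biUnion.mpr ⟨v, hv, by simp [incidenceFinset_eq_filter, he]⟩
    simp [he, heU]
  · rw [sum_boole, filter_mem_eq_inter, inter_eq_right.mpr hU]
  · rintro c ⟨w, hw0, hcov, rfl⟩
    -- a pendant edge is the only edge covering its leaf
    have hweight : ∀ e ∈ U, 1 ≤ w e := fun e heU => by
      obtain ⟨v, hv, hev⟩ := mem_biUnion.mp heU
      obtain ⟨e', he'⟩ := hinc v hv
      rw [incidenceFinset_eq_filter, he', mem_singleton] at hev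
      simpa [hev, he'] using hcov v hv
    calc (#U : ℝ) = ∑ _e ∈ U, (1 : ℝ) := by simp
      _ ≤ ∑ e ∈ U, w e := sum_le_sum hweight
      _ ≤ ∑ e ∈ G.edgeFinset, w e := sum_le_sum_of_subset_of_nonneg hU fun e _ _ => hw0 e

/-- For an acyclic, bound-connected conjunctive query with binary atoms
(query graph `G`, free variables `free`, every variable occurring in some atom),
the query graph is a tree in which every free variable is a leaf, and
`ρ*(free) = 1` if the query is a single atom with both variables free,
and `ρ*(free) = |free|` otherwise. -/
theorem stmt_0 {V : Type*} [Fintype V] (G : SimpleGraph V) (free : Finset V)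
    (hacyc : G.IsAcyclic)
    (hvars : ∀ v : V, ∃ u : V, G.Adj v u)
    (hbc : ((G.induce {v : V | v ∉ free}).Connected ∧
              ∀ v ∈ free, ∃ u : V, u ∉ free ∧ G.Adj v u) ∨
           G.edgeFinset.card = 1) :
    G.IsTree ∧
    (∀ v ∈ free, G.degree v = 1) ∧
    ((∃ e : Sym2 V, G.edgeFinset = {e} ∧ ∀ v ∈ e, v ∈ free) →
        rhoStar G free = 1) ∧
    (¬ (∃ e : Sym2 V, G.edgeFinset = {e} ∧ ∀ v ∈ e, v ∈ free) →
        rhoStar G free = (free.card : ℝ)) := by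
  obtain ⟨hconn, hleaf, hfree_adj⟩ : G.Connected ∧
      (∀ v ∈ free, ∀ x y, G.Adj v x → G.Adj v y → x = y) ∧
      (∀ x ∈ free, ∀ y ∈ free, G.Adj x y →
        ∃ e : Sym2 V, G.edgeFinset = {e} ∧ ∀ v ∈ e, v ∈ free) := by
    rcases hbc with ⟨hS, hfree⟩ | hcard
    · have hdom : ∀ v ∉ {v : V | v ∉ free}, ∃ u ∈ {v : V | v ∉ free}, G.Adj v u :=
        fun v hv => hfree v (not_not.mp hv)
      have hleaf : ∀ v ∈ free, ∀ x y, G.Adj v x → G.Adj v y → x = y := fun v hv _ _ =>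
        hacyc.eq_of_adj_of_adj_of_notMem hS.preconnected hdom (not_not.mpr hv)
      refine ⟨connected_of_connected_induce hS hdom, hleaf, fun x hx y hy hxy => ?_⟩
      obtain ⟨u, hu, hxu⟩ := hfree x hx
      exact absurd (hleaf x hx y u hxy hxu ▸ hy) hu
    · obtain ⟨e, he⟩ := card_eq_one.mp hcard
      refine ⟨connected_of_edgeFinset_eq_singleton he hvars,
        fun v _ _ _ => eq_of_adj_of_adj_of_edgeFinset_eq_singleton he,
        fun x hx y hy hxy => ⟨e, he, fun v hv => ?_⟩⟩
      rw [← edge_eq_of_edgeFinset_eq_singleton he hxy] at hv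
      rcases Sym2.mem_iff.mp hv with rfl | rfl <;> assumption
  have hdeg : ∀ v ∈ free, G.degree v = 1 := fun v hv =>
    degree_eq_one_of_adj_unique (hvars v) (hleaf v hv)
  refine ⟨⟨hconn, hacyc⟩, hdeg, fun ⟨e, he, hfree⟩ => ?_, fun hnot => ?_⟩
  · rw [rhoStar_eq_card_biUnion_incidenceFinset G free hdeg,
      biUnion_incidenceFinset_eq_singleton he hfree, card_singleton, Nat.cast_one]
  · rw [rhoStar_eq_card_biUnion_incidenceFinset G free hdeg,
      card_biUnion_incidenceFinset_of_forall_not_adj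
        fun x hx y hy hxy => hnot (hfree_adj x hx y hy hxy),
      sum_congr rfl hdeg, sum_const, smul_eq_mul, mul_one]
end

section
/- Let Q be an acyclic CRPQ (query graph is a forest of binary atoms without self-loops or parallel edges) and Q' its k-expansion for k ≥ 2, obtained by replacing each atom R(X,Y) by a path of k fresh binary atoms through k−1 fresh bound variables. If Q is bound-connected with query tree T and free-variable set F, then: rho*_{Q'}(F) = |F|, even when Q consists of a single atom with both endpoints free (in which case rho*_Q(F) = 1 but rho*_{Q'}(F) = 2). -/
open scoped Classical

/-- Fractional edge cover number of a variable set `S` using a set of directed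
binary atoms: minimum total weight of nonnegative atom weights such that each
variable of `S` has incident weight at least 1. -/
noncomputable def drhoStar {α : Type*} (atoms : Finset (α × α)) (S : Finset α) : ℝ :=
  sInf {c : ℝ | ∃ w : α × α → ℝ, (∀ a, 0 ≤ w a) ∧
    (∀ v ∈ S, 1 ≤ ∑ a ∈ atoms.filter (fun a => a.1 = v ∨ a.2 = v), w a) ∧
    c = ∑ a ∈ atoms, w a}

/-- The (undirected simple) query graph of a set of binary atoms. -/
def qgraph {V : Type*} (atoms : Finset (V × V)) : SimpleGraph V where
  Adj u v := u ≠ v ∧ ((u, v) ∈ atoms ∨ (v, u) ∈ atoms)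
  symm := ⟨fun _ _ h => ⟨Ne.symm h.1, Or.symm h.2⟩⟩
  loopless := ⟨fun _ h => h.1 rfl⟩

/-- The `k`-expansion of a set of binary atoms: each atom `(X, Y)` is replaced by
a path of `k` fresh atoms through `k−1` fresh bound variables
`(e,0), …, (e,k−2)`. -/
def kexpand {V : Type*} [DecidableEq V] (atoms : Finset (V × V)) (k : ℕ) :
    Finset ((V ⊕ ((V × V) × ℕ)) × (V ⊕ ((V × V) × ℕ))) :=
  atoms.biUnion (fun e =>
    insert (Sum.inl e.1, Sum.inr (e, 0))
      (insert (Sum.inr (e, k - 2), Sum.inl e.2)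
        ((Finset.range (k - 2)).image
          (fun i => (Sum.inr (e, i), Sum.inr (e, i + 1))))))

/-!
Every free variable lies on some atom, so putting weight 1 on one expansion atom per free
variable covers the free set `F` with total weight `|F|`. Conversely, in the `k`-expansion every atom has a
fresh bound endpoint, so no atom meets two free variables; summing the covering constraints over
`F` then counts each atom's weight at most once, so every fractional cover has weight at least
`|F|`. For a single atom with both endpoints free, the atom itself covers `F` with weight 1.
-/

open Finset

section FractionalEdgeCover

variable {α : Type*} {atoms : Finset (α × α)} {S : Finset α} {w : α × α → ℝ}

def IsFracEdgeCover (atoms : Finset (α × α)) (S : Finset α) (w : α × α → ℝ) : Prop :=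
  (∀ a, 0 ≤ w a) ∧ ∀ v ∈ S, 1 ≤ ∑ a ∈ atoms.filter (fun a => a.1 = v ∨ a.2 = v), w a

lemma drhoStar_le_sum (hw : IsFracEdgeCover atoms S w) :
    drhoStar atoms S ≤ ∑ a ∈ atoms, w a :=
  csInf_le ⟨0, by rintro _ ⟨w', hw'0, -, rfl⟩; exact sum_nonneg fun a _ => hw'0 a⟩
    ⟨w, hw.1, hw.2, rfl⟩

lemma le_drhoStar {r : ℝ} (hne : ∃ w, IsFracEdgeCover atoms S w)
    (h : ∀ w, IsFracEdgeCover atoms S w → r ≤ ∑ a ∈ atoms, w a) :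
    r ≤ drhoStar atoms S := by
  obtain ⟨w, hw⟩ := hne
  exact le_csInf ⟨_, w, hw.1, hw.2, rfl⟩ (by rintro _ ⟨w', h0, h1, rfl⟩; exact h w' ⟨h0, h1⟩)

lemma isFracEdgeCover_indicator {B : Finset (α × α)} (hB : B ⊆ atoms)
    (hcov : ∀ v ∈ S, ∃ a ∈ B, a.1 = v ∨ a.2 = v) :
    IsFracEdgeCover atoms S (fun a => if a ∈ B then 1 else 0) := by
  refine ⟨fun a => by positivity, fun v hv => ?_⟩
  obtain ⟨a, haB, hav⟩ := hcov v hv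
  calc (1 : ℝ) = if a ∈ B then 1 else 0 := by simp [haB]
    _ ≤ _ := single_le_sum (f := fun a => if a ∈ B then (1 : ℝ) else 0)
          (fun _ _ => by positivity) (mem_filter.mpr ⟨hB haB, hav⟩)

lemma drhoStar_le_card_of_subset {B : Finset (α × α)} (hB : B ⊆ atoms)
    (hcov : ∀ v ∈ S, ∃ a ∈ B, a.1 = v ∨ a.2 = v) :
    drhoStar atoms S ≤ B.card := by
  refine (drhoStar_le_sum (isFracEdgeCover_indicator hB hcov)).trans_eq ?_
  rw [sum_boole, filter_mem_eq_inter, inter_eq_right.mpr hB]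

lemma drhoStar_le_card (hcov : ∀ v ∈ S, ∃ a ∈ atoms, a.1 = v ∨ a.2 = v) :
    drhoStar atoms S ≤ S.card := by
  choose! g hg hgv using hcov
  refine (drhoStar_le_card_of_subset (B := S.image g) ?_ ?_).trans (mod_cast card_image_le)
  · exact image_subset_iff.mpr hg
  · exact fun v hv => ⟨g v, mem_image_of_mem g hv, hgv v hv⟩

lemma one_le_sum_of_isFracEdgeCover {v : α} (hv : v ∈ S) (hw : IsFracEdgeCover atoms S w) :
    1 ≤ ∑ a ∈ atoms, w a :=
  (hw.2 v hv).trans (sum_le_sum_of_subset_of_nonneg (filter_subset _ _) fun a _ _ => hw.1 a)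

lemma card_le_sum_of_isFracEdgeCover (hind : ∀ a ∈ atoms, ¬(a.1 ∈ S ∧ a.2 ∈ S))
    (hw : IsFracEdgeCover atoms S w) : (S.card : ℝ) ≤ ∑ a ∈ atoms, w a := by
  have hmeet : ∀ a ∈ atoms, (S.filter fun v => a.1 = v ∨ a.2 = v).card ≤ 1 := by
    refine fun a ha => card_le_one.mpr fun v hv v' hv' => ?_
    rw [mem_filter] at hv hv'
    rcases hv.2 with rfl | rfl <;> rcases hv'.2 with rfl | rfl
    · rfl
    · exact absurd ⟨hv.1, hv'.1⟩ (hind a ha)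
    · exact absurd ⟨hv'.1, hv.1⟩ (hind a ha)
    · rfl
  calc (S.card : ℝ) = ∑ v ∈ S, (1 : ℝ) := by simp
    _ ≤ ∑ v ∈ S, ∑ a ∈ atoms.filter (fun a => a.1 = v ∨ a.2 = v), w a := sum_le_sum hw.2
    _ = ∑ a ∈ atoms, ∑ v ∈ S.filter (fun v => a.1 = v ∨ a.2 = v), w a := by
        simp only [sum_filter]; exact sum_comm
    _ ≤ ∑ a ∈ atoms, w a := by
        refine sum_le_sum fun a ha => ?_
        rw [sum_const, nsmul_eq_mul]
        exact mul_le_of_le_one_left (hw.1 a) (mod_cast hmeet a ha)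

lemma drhoStar_eq_card (hcov : ∀ v ∈ S, ∃ a ∈ atoms, a.1 = v ∨ a.2 = v)
    (hind : ∀ a ∈ atoms, ¬(a.1 ∈ S ∧ a.2 ∈ S)) :
    drhoStar atoms S = S.card :=
  le_antisymm (drhoStar_le_card hcov)
    (le_drhoStar ⟨_, isFracEdgeCover_indicator subset_rfl hcov⟩
      fun _ hw => card_le_sum_of_isFracEdgeCover hind hw)

lemma drhoStar_singleton {a : α × α} (hS : S.Nonempty) (hcov : ∀ v ∈ S, a.1 = v ∨ a.2 = v) :
    drhoStar {a} S = 1 := by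
  have hcov' : ∀ v ∈ S, ∃ b ∈ ({a} : Finset (α × α)), b.1 = v ∨ b.2 = v :=
    fun v hv => ⟨a, mem_singleton_self a, hcov v hv⟩
  obtain ⟨v, hv⟩ := hS
  refine le_antisymm ((drhoStar_le_card_of_subset subset_rfl hcov').trans_eq (by simp)) ?_
  exact le_drhoStar ⟨_, isFracEdgeCover_indicator subset_rfl hcov'⟩
    fun _ hw => one_le_sum_of_isFracEdgeCover hv hw

end FractionalEdgeCover

lemma exists_mem_of_qgraph_adj {V : Type*} {atoms : Finset (V × V)} {v u : V}
    (h : (qgraph atoms).Adj v u) : ∃ a ∈ atoms, a.1 = v ∨ a.2 = v := by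
  rcases h.2 with h | h
  · exact ⟨(v, u), h, Or.inl rfl⟩
  · exact ⟨(u, v), h, Or.inr rfl⟩

section KExpansion

variable {V : Type*} [DecidableEq V] {atoms : Finset (V × V)} {k : ℕ}

lemma exists_kexpand_incident_inl {v : V} (h : ∃ e ∈ atoms, e.1 = v ∨ e.2 = v) :
    ∃ a ∈ kexpand atoms k, a.1 = Sum.inl v ∨ a.2 = Sum.inl v := by
  obtain ⟨e, he, rfl | rfl⟩ := h
  · exact ⟨_, mem_biUnion.mpr ⟨e, he, mem_insert_self _ _⟩, Or.inl rfl⟩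
  · exact ⟨_, mem_biUnion.mpr ⟨e, he, mem_insert_of_mem (mem_insert_self _ _)⟩, Or.inr rfl⟩

lemma isRight_of_mem_kexpand {a : (V ⊕ ((V × V) × ℕ)) × (V ⊕ ((V × V) × ℕ))}
    (ha : a ∈ kexpand atoms k) : a.1.isRight ∨ a.2.isRight := by
  simp only [kexpand, mem_biUnion, mem_insert, mem_image] at ha
  obtain ⟨e, -, rfl | rfl | ⟨i, -, rfl⟩⟩ := ha <;> simp

lemma drhoStar_kexpand_image_inl {F : Finset V}
    (hcov : ∀ v ∈ F, ∃ e ∈ atoms, e.1 = v ∨ e.2 = v) :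
    drhoStar (kexpand atoms k) (F.image Sum.inl) = F.card := by
  rw [drhoStar_eq_card, card_image_of_injective _ Sum.inl_injective]
  · simp only [mem_image, forall_exists_index, and_imp]
    rintro _ v hv rfl
    exact exists_kexpand_incident_inl (hcov v hv)
  · intro a ha ⟨h1, h2⟩
    obtain ⟨x, -, hx⟩ := mem_image.mp h1
    obtain ⟨y, -, hy⟩ := mem_image.mp h2
    rcases isRight_of_mem_kexpand ha with h | h <;> simp [← hx, ← hy] at h

end KExpansion

theorem stmt_10_general {V : Type*} [DecidableEq V]
    (atoms : Finset (V × V)) (free : Finset V) (k : ℕ)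
    (hself : ∀ x : V, (x, x) ∉ atoms)
    (hvars : ∀ v : V, ∃ u : V, (qgraph atoms).Adj v u) :
    drhoStar (kexpand atoms k) (free.image Sum.inl) = (free.card : ℝ) ∧
    ((∃ a : V × V, atoms = {a} ∧ a.1 ∈ free ∧ a.2 ∈ free) →
      drhoStar atoms free = 1 ∧
      drhoStar (kexpand atoms k) (free.image Sum.inl) = 2) := by
  have hcov : ∀ v, ∃ e ∈ atoms, e.1 = v ∨ e.2 = v :=
    fun v => exists_mem_of_qgraph_adj (hvars v).choose_spec
  have hexp := drhoStar_kexpand_image_inl (k := k) (F := free) fun v _ => hcov v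
  refine ⟨hexp, ?_⟩
  rintro ⟨a, rfl, ha1, ha2⟩
  have hends : ∀ v ∈ free, a.1 = v ∨ a.2 = v := fun v _ => by
    obtain ⟨e, he, hev⟩ := hcov v
    rwa [mem_singleton.mp he] at hev
  have hne : a.1 ≠ a.2 := fun h => hself a.1 (mem_singleton.mpr (Prod.ext rfl h))
  have hfree : free = {a.1, a.2} := by
    refine Subset.antisymm (fun v hv => ?_) (insert_subset ha1 (singleton_subset_iff.mpr ha2))
    rcases hends v hv with rfl | rfl <;> simp
  refine ⟨drhoStar_singleton ⟨a.1, ha1⟩ hends, ?_⟩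
  rw [hexp, hfree, card_pair hne]
  norm_num

/-- Let `Q` be an acyclic CRPQ (query graph a forest of binary
atoms, no self-loops, no parallel edges) that is bound-connected, with free
variables `free`, and let `Q'` be its `k`-expansion for `k ≥ 2`. Then
`ρ*_{Q'}(free) = |free|`; this holds even when `Q` is a single atom with both
endpoints free, in which case `ρ*_Q(free) = 1` but `ρ*_{Q'}(free) = 2`. -/
theorem stmt_10 {V : Type*} [Fintype V] [DecidableEq V]
    (atoms : Finset (V × V)) (free : Finset V) (k : ℕ) (hk : 2 ≤ k)
    (hself : ∀ x : V, (x, x) ∉ atoms)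
    (hpar : ∀ x y : V, (x, y) ∈ atoms → (y, x) ∉ atoms)
    (hacyc : (qgraph atoms).IsAcyclic)
    (hvars : ∀ v : V, ∃ u : V, (qgraph atoms).Adj v u)
    (hbc : (((qgraph atoms).induce {v : V | v ∉ free}).Connected ∧
              ∀ v ∈ free, ∃ u : V, u ∉ free ∧ (qgraph atoms).Adj v u) ∨
           atoms.card = 1) :
    drhoStar (kexpand atoms k) (free.image Sum.inl) = (free.card : ℝ) ∧
    ((∃ a : V × V, atoms = {a} ∧ a.1 ∈ free ∧ a.2 ∈ free) →
      drhoStar atoms free = 1 ∧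
      drhoStar (kexpand atoms k) (free.image Sum.inl) = 2) :=
  stmt_10_general atoms free k hself hvars
end

section
/- Let Q be a conjunctive query and Q' a subquery (subset of atoms) such that every atom of Q whose variables are all contained in vars(Q') already belongs to Q'. If additionally for every pair of distinct free variables X, Y of Q' no atom of Q \ Q' contains both X and Y, then rho*_Q(free(Q')) = rho*_{Q'}(free(Q')). -/
open scoped Classical

/-- Fractional edge cover number of a variable set `S` using a set of hyperedges
(atoms of a conjunctive query of arbitrary arities). -/
noncomputable def hrhoStar {V : Type*} (atoms : Finset (Finset V)) (S : Finset V) : ℝ :=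
  sInf {c : ℝ | ∃ w : Finset V → ℝ, (∀ a, 0 ≤ w a) ∧
    (∀ v ∈ S, 1 ≤ ∑ a ∈ atoms.filter (fun a => v ∈ a), w a) ∧
    c = ∑ a ∈ atoms, w a}

/-!
A fractional cover by the atoms of `Q'` is one by the atoms of `Q`, so `ρ*_Q ≤ ρ*_{Q'}`.
Conversely, an atom of `Q \ Q'` meets `free(Q')` in at most one variable, so its weight can be
moved to an atom of `Q'` containing that variable; every free variable stays covered and the
total weight does not grow.
-/

open Finset

namespace HRhoStar

variable {V : Type*} {A A' : Finset (Finset V)} {S : Finset V} {w : Finset V → ℝ}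

def IsFracEdgeCover (A : Finset (Finset V)) (S : Finset V) (w : Finset V → ℝ) : Prop :=
  (∀ a, 0 ≤ w a) ∧ ∀ v ∈ S, 1 ≤ ∑ a ∈ A with v ∈ a, w a

theorem hrhoStar_le (hw : IsFracEdgeCover A S w) : hrhoStar A S ≤ ∑ a ∈ A, w a :=
  csInf_le ⟨0, fun _ ⟨_, h0, _, hc⟩ => hc ▸ sum_nonneg fun a _ => h0 a⟩ ⟨w, hw.1, hw.2, rfl⟩

theorem isFracEdgeCover_one (hS : ∀ v ∈ S, ∃ a ∈ A, v ∈ a) : IsFracEdgeCover A S 1 := by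
  refine ⟨fun _ => zero_le_one, fun v hv => ?_⟩
  obtain ⟨a, ha, hva⟩ := hS v hv
  exact single_le_sum (fun _ _ => zero_le_one) (mem_filter.2 ⟨ha, hva⟩)

theorem le_hrhoStar {c : ℝ} (hS : ∀ v ∈ S, ∃ a ∈ A, v ∈ a)
    (h : ∀ w, IsFracEdgeCover A S w → c ≤ ∑ a ∈ A, w a) : c ≤ hrhoStar A S :=
  le_csInf ⟨_, 1, (isFracEdgeCover_one hS).1, (isFracEdgeCover_one hS).2, rfl⟩
    fun _ ⟨w, hw0, hw, hc⟩ => hc ▸ h w ⟨hw0, hw⟩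

theorem hrhoStar_le_of_subset (hsub : A' ⊆ A) (hS : ∀ v ∈ S, ∃ a ∈ A', v ∈ a) :
    hrhoStar A S ≤ hrhoStar A' S := by
  refine le_hrhoStar hS fun w hw => ?_
  set w' : Finset V → ℝ := fun a => if a ∈ A' then w a else 0
  have hrestrict : ∀ s, ∑ a ∈ s, w' a = ∑ a ∈ s ∩ A', w a := fun s => sum_ite_mem s A' w
  have hw' : IsFracEdgeCover A S w' := by
    refine ⟨fun a => by by_cases ha : a ∈ A' <;> simp [w', ha, hw.1 a], fun v hv => ?_⟩
    rw [hrestrict, filter_inter, inter_eq_right.2 hsub]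
    exact hw.2 v hv
  simpa [hrestrict, inter_eq_right.2 hsub] using hrhoStar_le hw'

noncomputable def rerouteWeight (A A' : Finset (Finset V)) (r : Finset V → Finset V)
    (w : Finset V → ℝ) (b : Finset V) : ℝ :=
  w b + ∑ a ∈ A \ A' with r a = b, w a

theorem sum_rerouteWeight_le (r : Finset V → Finset V) (hw0 : ∀ a, 0 ≤ w a) (hsub : A' ⊆ A) :
    ∑ b ∈ A', rerouteWeight A A' r w b ≤ ∑ a ∈ A, w a :=
  calc ∑ b ∈ A', rerouteWeight A A' r w b
      = ∑ b ∈ A', w b + ∑ b ∈ A', ∑ a ∈ A \ A' with r a = b, w a := sum_add_distrib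
    _ ≤ ∑ b ∈ A', w b + ∑ a ∈ A \ A', w a := by
      gcongr
      exact sum_fiberwise_le_sum_of_sum_fiber_nonneg fun _ _ => sum_nonneg fun a _ => hw0 a
    _ = ∑ a ∈ A, w a := by rw [add_comm, sum_sdiff hsub]

theorem IsFracEdgeCover.rerouteWeight (hw : IsFracEdgeCover A S w) (hsub : A' ⊆ A)
    {r : Finset V → Finset V} (hr : ∀ a ∈ A, a ∉ A' → ∀ v ∈ S, v ∈ a → r a ∈ A' ∧ v ∈ r a) :
    IsFracEdgeCover A' S (HRhoStar.rerouteWeight A A' r w) := by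
  refine ⟨fun b => add_nonneg (hw.1 b) (sum_nonneg fun a _ => hw.1 a), fun v hv => ?_⟩
  have hmaps : ∀ a ∈ (A \ A').filter (v ∈ ·), r a ∈ A'.filter (v ∈ ·) := fun a ha => by
    obtain ⟨ha, hva⟩ := mem_filter.1 ha
    obtain ⟨haA, haA'⟩ := mem_sdiff.1 ha
    exact mem_filter.2 (hr a haA haA' v hv hva)
  have hsplit : (A \ A').filter (v ∈ ·) = A.filter (v ∈ ·) \ A'.filter (v ∈ ·) := by
    ext a; simp only [mem_filter, mem_sdiff]; tauto
  calc 1 ≤ ∑ a ∈ A with v ∈ a, w a := hw.2 v hv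
    _ = ∑ a ∈ A' with v ∈ a, w a + ∑ a ∈ (A \ A').filter (v ∈ ·), w a := by
      rw [hsplit, add_comm, sum_sdiff (filter_subset_filter _ hsub)]
    _ = ∑ b ∈ A' with v ∈ b, w b +
        ∑ b ∈ A' with v ∈ b, ∑ a ∈ (A \ A').filter (v ∈ ·) with r a = b, w a := by
      rw [sum_fiberwise_of_maps_to hmaps]
    _ ≤ ∑ b ∈ A' with v ∈ b, w b + ∑ b ∈ A' with v ∈ b, ∑ a ∈ A \ A' with r a = b, w a := by
      gcongr with b
      · exact fun a _ _ => hw.1 a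
      · exact filter_subset _ _
    _ = ∑ b ∈ A' with v ∈ b, HRhoStar.rerouteWeight A A' r w b := sum_add_distrib.symm

theorem hrhoStar_le_of_reroute (hsub : A' ⊆ A) (hS : ∀ v ∈ S, ∃ a ∈ A', v ∈ a)
    (hr : ∀ a ∈ A, a ∉ A' → ∃ b, ∀ v ∈ S, v ∈ a → b ∈ A' ∧ v ∈ b) :
    hrhoStar A' S ≤ hrhoStar A S := by
  choose! r hr using hr
  refine le_hrhoStar (fun v hv => (hS v hv).imp fun a ha => ⟨hsub ha.1, ha.2⟩) fun w hw => ?_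
  exact (hrhoStar_le (hw.rerouteWeight hsub hr)).trans (sum_rerouteWeight_le r hw.1 hsub)

theorem exists_reroute_target {a : Finset V} (hS : ∀ v ∈ S, ∃ b ∈ A', v ∈ b)
    (ha : ∀ u ∈ S, ∀ v ∈ S, u ∈ a → v ∈ a → u = v) :
    ∃ b, ∀ v ∈ S, v ∈ a → b ∈ A' ∧ v ∈ b := by
  by_cases hmeet : ∃ u ∈ S, u ∈ a
  · obtain ⟨u, huS, hua⟩ := hmeet
    obtain ⟨b, hb, hub⟩ := hS u huS
    exact ⟨b, fun v hvS hva => ha u huS v hvS hua hva ▸ ⟨hb, hub⟩⟩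
  · exact ⟨∅, fun v hvS hva => (hmeet ⟨v, hvS, hva⟩).elim⟩

end HRhoStar

open HRhoStar in
theorem stmt_15_general {V : Type*} [DecidableEq V]
    (atoms atoms' : Finset (Finset V)) (free' : Finset V)
    (hsub : atoms' ⊆ atoms)
    (hfree : free' ⊆ atoms'.biUnion id)
    (hnoshare : ∀ X ∈ free', ∀ Y ∈ free', X ≠ Y →
        ∀ a ∈ atoms, a ∉ atoms' → ¬ (X ∈ a ∧ Y ∈ a)) :
    hrhoStar atoms free' = hrhoStar atoms' free' := by
  have hcov : ∀ v ∈ free', ∃ b ∈ atoms', v ∈ b := fun v hv => by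
    simpa using mem_biUnion.1 (hfree hv)
  refine le_antisymm (hrhoStar_le_of_subset hsub hcov) (hrhoStar_le_of_reroute hsub hcov ?_)
  intro a haA haA'
  exact exists_reroute_target hcov fun u hu v hv hua hva =>
    by_contra fun huv => hnoshare u hu v hv huv a haA haA' ⟨hua, hva⟩

/-- Let `Q` be a conjunctive query (atom set `atoms`) and `Q'` a
subquery (atom set `atoms' ⊆ atoms`, free variables `free'`) such that every
atom of `Q` whose variables are all contained in `vars(Q')` already belongs to
`Q'`. If additionally no atom of `Q \ Q'` contains two distinct free variables
of `Q'`, then `ρ*_Q(free(Q')) = ρ*_{Q'}(free(Q'))`. -/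
theorem stmt_15 {V : Type*} [DecidableEq V]
    (atoms atoms' : Finset (Finset V)) (free' : Finset V)
    (hsub : atoms' ⊆ atoms)
    (hfree : free' ⊆ atoms'.biUnion id)
    (hclosed : ∀ a ∈ atoms, a ⊆ atoms'.biUnion id → a ∈ atoms')
    (hnoshare : ∀ X ∈ free', ∀ Y ∈ free', X ≠ Y →
        ∀ a ∈ atoms, a ∉ atoms' → ¬ (X ∈ a ∧ Y ∈ a)) :
    hrhoStar atoms free' = hrhoStar atoms' free' :=
  stmt_15_general atoms atoms' free' hsub hfree hnoshare
end
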